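/- Let S and M be symmetric positive definite real N×N matrices, f ∈ ℝ^N and y ≥ 0. Let w be the solution of (e^{-y} S + M) w = f, let w̃ ∈ ℝ^N be arbitrary, and set r := f - (e^{-y} S + M) w̃. Then ‖w - w̃‖_M ≤ ‖r‖₂ / ( √(λ_min(M)) · ( e^{-y} λ_min(S, M) + 1 ) ), where ‖r‖₂ is the Euclidean norm of r, λ_min(M) is the smallest eigenvalue of M, and λ_min(S, M) := inf over nonzero x of (xᵀ S x)/(xᵀ M x). -/

import Mathlib

/-!
Put `e := w - w̃`, so that `r = (e^{-y} S + M) e`. Bounding `eᵀ S e` below by `λ_min(S, M) ‖e‖_M²`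
gives the coercivity estimate `(e^{-y} λ_min(S, M) + 1) ‖e‖_M² ≤ eᵀ r`, and Cauchy–Schwarz together
with `√λ_min(M) ‖e‖₂ ≤ ‖e‖_M` bounds `eᵀ r` by `‖e‖_M ‖r‖₂ / √λ_min(M)`; divide by `‖e‖_M`.
That `λ_min(M) > 0` as soon as `N > 0` is a compactness argument: the Rayleigh quotient is invariant
under scaling, so its infimum over `x ≠ 0` is attained on a sphere.
-/

open Matrix

/-- The smallest generalized eigenvalue of the pair `(S, M)`:
`λ_min(S, M) = inf_{x ≠ 0} (xᵀ S x)/(xᵀ M x)`. -/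
noncomputable def lamMinGen {N : ℕ} (S M : Matrix (Fin N) (Fin N) ℝ) : ℝ :=
  sInf ((fun x : Fin N → ℝ => (x ⬝ᵥ S.mulVec x) / (x ⬝ᵥ M.mulVec x)) '' {x | x ≠ 0})

/-- The `M`-norm `‖x‖_M = √(xᵀ M x)`. -/
noncomputable def normWeighted {N : ℕ} (M : Matrix (Fin N) (Fin N) ℝ) (x : Fin N → ℝ) : ℝ :=
  Real.sqrt (x ⬝ᵥ M.mulVec x)

/-- The Euclidean norm `‖x‖₂ = √(xᵀ x)`. -/
noncomputable def normEuclid {N : ℕ} (x : Fin N → ℝ) : ℝ :=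
  Real.sqrt (x ⬝ᵥ x)

section RayleighQuotient

variable {n : Type*} [Fintype n] {S M : Matrix n n ℝ}

lemma dotProduct_le_sqrt_mul_sqrt (x y : n → ℝ) : x ⬝ᵥ y ≤ √(x ⬝ᵥ x) * √(y ⬝ᵥ y) := by
  simpa [dotProduct, sq] using Real.sum_mul_le_sqrt_mul_sqrt Finset.univ x y

lemma Matrix.PosDef.dotProduct_mulVec_pos_real (hM : M.PosDef) {x : n → ℝ} (hx : x ≠ 0) :
    0 < x ⬝ᵥ M *ᵥ x := by
  simpa using hM.dotProduct_mulVec_pos hx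

noncomputable def genRayleigh (S M : Matrix n n ℝ) (x : n → ℝ) : ℝ :=
  (x ⬝ᵥ S *ᵥ x) / (x ⬝ᵥ M *ᵥ x)

lemma genRayleigh_smul (S M : Matrix n n ℝ) (x : n → ℝ) {t : ℝ} (ht : t ≠ 0) :
    genRayleigh S M (t • x) = genRayleigh S M x := by
  simp only [genRayleigh, mulVec_smul, smul_dotProduct, dotProduct_smul, smul_eq_mul, ← mul_assoc]
  exact mul_div_mul_left _ _ (mul_ne_zero ht ht)

lemma continuousOn_genRayleigh (S : Matrix n n ℝ) (hM : M.PosDef) :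
    ContinuousOn (genRayleigh S M) {x | x ≠ 0} := by
  refine ContinuousOn.div ?_ ?_ fun x hx => (hM.dotProduct_mulVec_pos_real hx).ne' <;>
    · refine Continuous.continuousOn ?_
      simp only [dotProduct, mulVec]
      fun_prop

lemma exists_isMinOn_genRayleigh [Nonempty n] (S : Matrix n n ℝ) (hM : M.PosDef) :
    ∃ x₀ ≠ 0, IsMinOn (genRayleigh S M) {x | x ≠ 0} x₀ := by
  have hsphere : Metric.sphere (0 : n → ℝ) 1 ⊆ {x | x ≠ 0} := fun x hx h0 => by simp [h0] at hx
  obtain ⟨x₀, hx₀, hmin⟩ := (isCompact_sphere (0 : n → ℝ) 1).exists_isMinOn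
    (NormedSpace.sphere_nonempty.2 zero_le_one) ((continuousOn_genRayleigh S hM).mono hsphere)
  refine ⟨x₀, hsphere hx₀, fun x (hx : x ≠ 0) => ?_⟩
  show genRayleigh S M x₀ ≤ genRayleigh S M x
  have hnorm : ‖x‖ ≠ 0 := norm_ne_zero_iff.2 hx
  rw [← genRayleigh_smul S M x (inv_ne_zero hnorm)]
  exact hmin (by simp [norm_smul, hnorm])

end RayleighQuotient

section GeneralizedEigenvalue

variable {N : ℕ} {S M : Matrix (Fin N) (Fin N) ℝ}

lemma isLeast_lamMinGen [Nonempty (Fin N)] (S : Matrix (Fin N) (Fin N) ℝ) (hM : M.PosDef) :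
    IsLeast (genRayleigh S M '' {x | x ≠ 0}) (lamMinGen S M) := by
  obtain ⟨x₀, hx₀, hmin⟩ := exists_isMinOn_genRayleigh S hM
  have hleast : IsLeast (genRayleigh S M '' {x | x ≠ 0}) (genRayleigh S M x₀) :=
    ⟨Set.mem_image_of_mem _ hx₀, Set.forall_mem_image.2 hmin⟩
  rwa [← hleast.csInf_eq] at hleast

lemma lamMinGen_pos [Nonempty (Fin N)] (hS : S.PosDef) (hM : M.PosDef) : 0 < lamMinGen S M := by
  obtain ⟨x, hx, hxeq⟩ := (isLeast_lamMinGen S hM).1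
  rw [← hxeq]
  exact div_pos (hS.dotProduct_mulVec_pos_real hx) (hM.dotProduct_mulVec_pos_real hx)

lemma lamMinGen_nonneg (hS : S.PosSemidef) (hM : M.PosSemidef) : 0 ≤ lamMinGen S M := by
  refine Real.sInf_nonneg ?_
  rintro _ ⟨x, -, rfl⟩
  exact div_nonneg (by simpa using hS.dotProduct_mulVec_nonneg x)
    (by simpa using hM.dotProduct_mulVec_nonneg x)

lemma lamMinGen_mul_le (S : Matrix (Fin N) (Fin N) ℝ) (hM : M.PosDef) (x : Fin N → ℝ) :
    lamMinGen S M * (x ⬝ᵥ M *ᵥ x) ≤ x ⬝ᵥ S *ᵥ x := by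
  rcases eq_or_ne x 0 with rfl | hx
  · simp
  have : Nonempty (Fin N) := ⟨(Function.ne_iff.1 hx).choose⟩
  rw [← le_div_iff₀ (hM.dotProduct_mulVec_pos_real hx)]
  exact (isLeast_lamMinGen S hM).2 ⟨x, hx, rfl⟩

lemma sqrt_lamMinGen_one_mul_normEuclid_le (M : Matrix (Fin N) (Fin N) ℝ) (x : Fin N → ℝ) :
    √(lamMinGen M 1) * normEuclid x ≤ normWeighted M x := by
  have h := lamMinGen_mul_le M PosDef.one x
  rw [one_mulVec] at h
  rw [normEuclid, normWeighted, ← Real.sqrt_mul' _ (by simpa using dotProduct_self_star_nonneg x)]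
  exact Real.sqrt_le_sqrt h

lemma normWeighted_sq (hM : M.PosSemidef) (x : Fin N → ℝ) :
    normWeighted M x ^ 2 = x ⬝ᵥ M *ᵥ x :=
  Real.sq_sqrt (by simpa using hM.dotProduct_mulVec_nonneg x)

lemma mul_dotProduct_le_dotProduct_smul_add_mulVec {t : ℝ} (ht : 0 ≤ t) (hM : M.PosDef)
    (x : Fin N → ℝ) :
    (t * lamMinGen S M + 1) * (x ⬝ᵥ M *ᵥ x) ≤ x ⬝ᵥ (t • S + M) *ᵥ x := by
  have h := mul_le_mul_of_nonneg_left (lamMinGen_mul_le S hM x) ht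
  simp only [add_mulVec, smul_mulVec, dotProduct_add, dotProduct_smul, smul_eq_mul]
  linarith

lemma mul_normWeighted_le_normEuclid {t : ℝ} (ht : 0 ≤ t) (hM : M.PosDef) (x : Fin N → ℝ) :
    √(lamMinGen M 1) * (t * lamMinGen S M + 1) * normWeighted M x ≤
      normEuclid ((t • S + M) *ᵥ x) := by
  set a := normWeighted M x
  set R := normEuclid ((t • S + M) *ᵥ x)
  have hR : 0 ≤ R := Real.sqrt_nonneg _
  have key : a * (√(lamMinGen M 1) * (t * lamMinGen S M + 1) * a) ≤ a * R :=
    calc a * (√(lamMinGen M 1) * (t * lamMinGen S M + 1) * a)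
        = √(lamMinGen M 1) * ((t * lamMinGen S M + 1) * (x ⬝ᵥ M *ᵥ x)) := by
          rw [← normWeighted_sq hM.posSemidef]; ring
      _ ≤ √(lamMinGen M 1) * (x ⬝ᵥ (t • S + M) *ᵥ x) := by
          gcongr; exact mul_dotProduct_le_dotProduct_smul_add_mulVec ht hM x
      _ ≤ √(lamMinGen M 1) * (normEuclid x * R) := by
          gcongr; exact dotProduct_le_sqrt_mul_sqrt _ _
      _ = √(lamMinGen M 1) * normEuclid x * R := by ring
      _ ≤ a * R := by gcongr; exact sqrt_lamMinGen_one_mul_normEuclid_le M x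
  rcases (show 0 ≤ a from Real.sqrt_nonneg _).eq_or_lt with ha | ha
  · rwa [← ha, mul_zero]
  · exact le_of_mul_le_mul_left key ha

end GeneralizedEigenvalue

theorem rbm_error_indicator_plus_general {N : ℕ} (S M : Matrix (Fin N) (Fin N) ℝ)
    (hS : S.PosDef) (hM : M.PosDef) (f : Fin N → ℝ) (y : ℝ)
    (w wt : Fin N → ℝ) (hw : (Real.exp (-y) • S + M).mulVec w = f) :
    normWeighted M (w - wt) ≤
      normEuclid (f - (Real.exp (-y) • S + M).mulVec wt) /
        (Real.sqrt (lamMinGen M 1) * (Real.exp (-y) * lamMinGen S M + 1)) := by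
  rw [← hw, ← mulVec_sub]
  rcases isEmpty_or_nonempty (Fin N) with _ | _
  · simp [Subsingleton.elim (w - wt) 0, normWeighted, normEuclid]
  have hK : 0 < Real.exp (-y) * lamMinGen S M + 1 := by
    have := lamMinGen_nonneg hS.posSemidef hM.posSemidef
    positivity
  rw [le_div_iff₀ (mul_pos (Real.sqrt_pos.2 (lamMinGen_pos hM PosDef.one)) hK), mul_comm]
  exact mul_normWeighted_le_normEuclid (Real.exp_pos _).le hM _

/-- A posteriori error indicator `Δ_{n,+}(y)` (residual bound for the `+` problem):
if `(e^{-y} S + M) w = f` and `r = f - (e^{-y} S + M) w̃`, then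
`‖w - w̃‖_M ≤ ‖r‖₂ / (√(λ_min(M)) (e^{-y} λ_min(S,M) + 1))`, where `λ_min(M)` is the
smallest eigenvalue of `M`, i.e. `λ_min(M, I)`. -/
theorem rbm_error_indicator_plus {N : ℕ} (S M : Matrix (Fin N) (Fin N) ℝ)
    (hS : S.PosDef) (hM : M.PosDef) (f : Fin N → ℝ) (y : ℝ) (hy : 0 ≤ y)
    (w wt : Fin N → ℝ) (hw : (Real.exp (-y) • S + M).mulVec w = f) :
    normWeighted M (w - wt) ≤
      normEuclid (f - (Real.exp (-y) • S + M).mulVec wt) /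
        (Real.sqrt (lamMinGen M 1) * (Real.exp (-y) * lamMinGen S M + 1)) :=
  rbm_error_indicator_plus_general S M hS hM f y w wt hw
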